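/- Let d ∈ (0,1] with n := 1/d ∈ ℕ and N ∈ ℕ with N/n ∈ ℕ. Let F : ℝ² → ℝ² satisfy F(-y) = -F(y) for all y, and F(y) = 0 whenever the torus distance |y| ≥ 1/2. Then the configuration of N particles x̄_{i,m} = (i·d, m·n/N) for i = 0,…,n-1 and m = 0,…,N/n - 1, i.e. n equidistant vertical lines each carrying N/n uniformly spaced particles, is a steady state of the system dx_j/dt = (1/N) Σ_{k≠j} F(x_j - x_k) on the torus 𝕋²: for each particle the sum of forces exerted by all other particles vanishes. -/

import Mathlib

open Finset

/-- Representative in `[-1/2, 1/2)` of a real number modulo `1`. -/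
noncomputable def torusRep (t : ℝ) : ℝ := Int.fract (t + 1/2) - 1/2

/-- Difference of two points of the unit torus `𝕋² = [0,1)²`, taken with
coordinates in `[-1/2, 1/2)`. -/
noncomputable def torusDiff (x y : EuclideanSpace ℝ (Fin 2)) : EuclideanSpace ℝ (Fin 2) :=
  WithLp.toLp 2 (fun i => torusRep (x i - y i))

/-!
The configuration is the image of the finite group `ℤ/n × ℤ/m` under a map `x` which is a group
homomorphism modulo `ℤ²`, so the force exerted on particle `p` by particle `q` is
`f (p - q)` with `f r = F (torusDiff (x r) (x 0))`, and the total force on every particle is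
`∑ r, f r`. This `f` is odd: away from the antipodal lines, where the minimal-image convention
breaks the symmetry of `torusRep`, this is the antisymmetry of `F`, and on them both forces
vanish by the cut-off at distance `1/2`. Hence `∑ r, f r = ∑ r, f (-r) = -∑ r, f r = 0`.
-/

lemma torusRep_add_intCast (t : ℝ) (k : ℤ) : torusRep (t + k) = torusRep t := by
  rw [torusRep, add_right_comm, Int.fract_add_intCast, torusRep]

lemma torusRep_neg_of_ne {t : ℝ} (h : torusRep t ≠ -(1/2)) : torusRep (-t) = -torusRep t := by
  have hf : Int.fract (t + 1/2) ≠ 0 := fun h0 => h (by rw [torusRep, h0]; ring)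
  rw [torusRep, torusRep, show -t + 1/2 = -(t + 1/2) + 1 by ring, Int.fract_add_one,
    Int.fract_neg hf]
  ring

lemma torusRep_neg_of_eq {t : ℝ} (h : torusRep t = -(1/2)) : torusRep (-t) = -(1/2) := by
  have hf : Int.fract (t + 1/2) = 0 := by rw [torusRep] at h; linarith
  rw [torusRep, show -t + 1/2 = -(t + 1/2) + 1 by ring, Int.fract_add_one,
    Int.fract_neg_eq_zero.mpr hf]
  ring

lemma torusRep_val_mul_sub_val_mul {L : ℕ} {h : ℝ} (hL : L * h = 1) (a b : Fin L) :
    torusRep ((a : ℕ) * h - (b : ℕ) * h) = torusRep (((a - b : Fin L) : ℕ) * h) := by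
  rcases le_or_gt b a with hba | hab
  · rw [Fin.coe_sub_iff_le.mpr hba, Nat.cast_sub hba, sub_mul]
  · have hb : (b : ℕ) ≤ L + a := by omega
    rw [Fin.coe_sub_iff_lt.mpr hab, Nat.cast_sub hb, Nat.cast_add, sub_mul, add_mul, hL,
      add_sub_assoc, add_comm, ← Int.cast_one, torusRep_add_intCast]

lemma torusDiff_apply (x y : EuclideanSpace ℝ (Fin 2)) (i : Fin 2) :
    torusDiff x y i = torusRep (x i - y i) := rfl

section Force

variable {M : Type*} [AddCommGroup M] {F : EuclideanSpace ℝ (Fin 2) → M}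

lemma force_torusDiff_swap (hanti : ∀ y, F (-y) = -F y)
    (hcut : ∀ y : EuclideanSpace ℝ (Fin 2), (1/2 : ℝ) ≤ ‖y‖ → F y = 0)
    (x y : EuclideanSpace ℝ (Fin 2)) : F (torusDiff y x) = -F (torusDiff x y) := by
  have hvanish : ∀ z : EuclideanSpace ℝ (Fin 2), ∀ i, z i = -(1/2) → F z = 0 := fun z i hz =>
    hcut z (by simpa [hz, abs_of_pos] using PiLp.norm_apply_le z i)
  have hswap : ∀ i, torusDiff y x i = torusRep (-(x i - y i)) := fun i => by
    rw [torusDiff_apply, neg_sub]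
  by_cases hhalf : ∃ i, torusDiff x y i = -(1/2)
  · obtain ⟨i, hi⟩ := hhalf
    rw [hvanish _ i hi, hvanish _ i ((hswap i).trans (torusRep_neg_of_eq hi)), neg_zero]
  · push Not at hhalf
    have hneg : torusDiff y x = -torusDiff x y := by
      ext i
      rw [hswap, torusRep_neg_of_ne (hhalf i)]
      rfl
    rw [hneg, hanti]

/-- The hypothesis `hx` says that `x` is a group homomorphism modulo `ℤ²`. -/
lemma sum_force_torusDiff_eq_zero [IsAddTorsionFree M] {G : Type*} [AddCommGroup G] [Fintype G]
    (hanti : ∀ y, F (-y) = -F y)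
    (hcut : ∀ y : EuclideanSpace ℝ (Fin 2), (1/2 : ℝ) ≤ ‖y‖ → F y = 0)
    (x : G → EuclideanSpace ℝ (Fin 2))
    (hx : ∀ p q, torusDiff (x p) (x q) = torusDiff (x (p - q)) (x 0)) (p : G) :
    ∑ q, F (torusDiff (x p) (x q)) = 0 := by
  have hodd : Function.Odd fun r => F (torusDiff (x r) (x 0)) := fun r => by
    dsimp only
    rw [← zero_sub, ← hx, force_torusDiff_swap hanti hcut]
  calc ∑ q, F (torusDiff (x p) (x q))
      = ∑ r, F (torusDiff (x r) (x 0)) :=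
        Fintype.sum_equiv (Equiv.subLeft p) _ _ fun q => by rw [hx]; rfl
    _ = 0 := hodd.sum_eq_zero

end Force

theorem stmt_5_general (d : ℝ) (n : ℕ) (hn : (n : ℝ) = 1 / d)
    (N m : ℕ) (hm : N = n * m)
    (F : EuclideanSpace ℝ (Fin 2) → EuclideanSpace ℝ (Fin 2))
    (hanti : ∀ y, F (-y) = -F y)
    (hcut : ∀ y : EuclideanSpace ℝ (Fin 2), (1/2 : ℝ) ≤ ‖y‖ → F y = 0)
    (x : Fin n × Fin m → EuclideanSpace ℝ (Fin 2))
    (hx : ∀ p : Fin n × Fin m, x p = ![(p.1 : ℝ) * d, (p.2 : ℝ) * (n : ℝ) / N]) :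
    ∀ p : Fin n × Fin m,
      (1 / (N : ℝ)) • ∑ q ∈ univ.filter (· ≠ p), F (torusDiff (x p) (x q)) = 0 := by
  intro p
  have : NeZero n := ⟨p.1.pos.ne'⟩
  have : NeZero m := ⟨p.2.pos.ne'⟩
  have : IsAddTorsionFree (EuclideanSpace ℝ (Fin 2)) := .of_isTorsionFree ℝ _
  have hnd : (n : ℝ) * d = 1 := by
    have hd0 : d ≠ 0 := by rintro rfl; simp [NeZero.ne n] at hn
    rw [hn, one_div_mul_cancel hd0]
  have hmN : (m : ℝ) * (n / N) = 1 := by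
    rw [hm, Nat.cast_mul]
    field_simp [NeZero.ne (n : ℝ), NeZero.ne (m : ℝ)]
  have hcov : ∀ p q, torusDiff (x p) (x q) = torusDiff (x (p - q)) (x 0) := fun p q => by
    ext i
    fin_cases i
    · simpa [torusDiff_apply, hx] using torusRep_val_mul_sub_val_mul hnd p.1 q.1
    · simpa [torusDiff_apply, hx, mul_div_assoc] using torusRep_val_mul_sub_val_mul hmN p.2 q.2
  have hself : F (torusDiff (x p) (x p)) = 0 :=
    self_eq_neg.mp (force_torusDiff_swap hanti hcut _ _)
  rw [filter_ne', sum_erase _ (f := fun q => F (torusDiff (x p) (x q))) hself,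
    sum_force_torusDiff_eq_zero hanti hcut x hcov p, smul_zero]

theorem stmt_5 (d : ℝ) (hd : 0 < d) (hd1 : d ≤ 1) (n : ℕ) (hn : (n : ℝ) = 1 / d)
    (N m : ℕ) (hm : N = n * m) (hmpos : 0 < m)
    (F : EuclideanSpace ℝ (Fin 2) → EuclideanSpace ℝ (Fin 2))
    (hanti : ∀ y, F (-y) = -F y)
    (hcut : ∀ y : EuclideanSpace ℝ (Fin 2), (1/2 : ℝ) ≤ ‖y‖ → F y = 0)
    (x : Fin n × Fin m → EuclideanSpace ℝ (Fin 2))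
    (hx : ∀ p : Fin n × Fin m, x p = ![(p.1 : ℝ) * d, (p.2 : ℝ) * (n : ℝ) / N]) :
    ∀ p : Fin n × Fin m,
      (1 / (N : ℝ)) • ∑ q ∈ univ.filter (· ≠ p), F (torusDiff (x p) (x q)) = 0 :=
  stmt_5_general d n hn N m hm F hanti hcut x hx
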